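/- arXiv:2509.08107 — 2 statements merged into one kernel-verified Lean document; each statement's English description precedes it below -/
import Mathlib

section
/- Hedge regret bound: let η > 0, let T ≥ 1, and let θ_1,…,θ_T be an arbitrary sequence in Θ (not necessarily best responses). Then for every index i ∈ {1,…,I}, (1/T)·Σ_{t=1}^T Σ_{j=1}^I p_{j,t}·R(j,θ_t) ≤ (1/T)·Σ_{t=1}^T R(i,θ_t) + η·M²/2 + ln(I)/(T·η). -/
/-!
Potential argument. By `exp (-x) ≤ 1 - x + x² / 2` and `1 + y ≤ exp y`, the total weight
`W_t = ∑ⱼ w_{j,t}` shrinks in round `t + 1` by at most the factor `exp (-η L_{t+1} + η² M² / 2)`,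
where `L_{t+1} = ∑ⱼ p_{j,t+1} R(j, θ_{t+1})` is the loss of Hedge. Telescoping from `W_0 = I` and
comparing with the single weight `w_{i,T} = exp (-η ∑ₜ R(i, θ_t)) ≤ W_T`, then taking logarithms and
dividing by `T η`, gives the bound.
-/

open Finset Real

lemma Real.exp_neg_le_one_sub_add_sq_div_two {x : ℝ} (hx : 0 ≤ x) :
    exp (-x) ≤ 1 - x + x ^ 2 / 2 := by
  rw [exp_neg, inv_le_iff_one_le_mul₀' (exp_pos x)]
  calc 1 ≤ (1 + x + x ^ 2 / 2) * (1 - x + x ^ 2 / 2) := by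
        nlinarith [sq_nonneg x, sq_nonneg (x ^ 2)]
    _ ≤ exp x * (1 - x + x ^ 2 / 2) := by
      gcongr
      · nlinarith [sq_nonneg (x - 1)]
      · exact quadratic_le_exp_of_nonneg hx

lemma sum_mul_exp_neg_le_exp {ι : Type*} [Fintype ι] {q ℓ : ι → ℝ} {η M : ℝ}
    (hq : ∀ j, 0 ≤ q j) (hq1 : ∑ j, q j = 1) (hη : 0 ≤ η) (hℓ : ∀ j, 0 ≤ ℓ j ∧ ℓ j ≤ M) :
    ∑ j, q j * exp (-η * ℓ j) ≤ exp (-η * ∑ j, q j * ℓ j + η ^ 2 * M ^ 2 / 2) := by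
  have hpoint : ∀ j, exp (-η * ℓ j) ≤ 1 - η * ℓ j + η ^ 2 * M ^ 2 / 2 := fun j => by
    have hηℓ : 0 ≤ η * ℓ j := mul_nonneg hη (hℓ j).1
    have hsq : (η * ℓ j) ^ 2 ≤ η ^ 2 * M ^ 2 := by
      rw [mul_pow]; gcongr; exacts [(hℓ j).1, (hℓ j).2]
    rw [neg_mul]
    linarith [exp_neg_le_one_sub_add_sq_div_two hηℓ]
  calc ∑ j, q j * exp (-η * ℓ j) ≤ ∑ j, q j * (1 - η * ℓ j + η ^ 2 * M ^ 2 / 2) :=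
        sum_le_sum fun j _ => mul_le_mul_of_nonneg_left (hpoint j) (hq j)
    _ = ∑ j, q j + -η * ∑ j, q j * ℓ j + (∑ j, q j) * (η ^ 2 * M ^ 2 / 2) := by
        rw [mul_sum, sum_mul, ← sum_add_distrib, ← sum_add_distrib]
        congr 1 with j
        ring
    _ = (-η * ∑ j, q j * ℓ j + η ^ 2 * M ^ 2 / 2) + 1 := by rw [hq1]; ring
    _ ≤ exp (-η * ∑ j, q j * ℓ j + η ^ 2 * M ^ 2 / 2) := add_one_le_exp _

lemma le_mul_exp_sum_of_le_mul_exp {W a : ℕ → ℝ} (h : ∀ t, W (t + 1) ≤ W t * exp (a t))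
    (T : ℕ) : W T ≤ W 0 * exp (∑ t ∈ range T, a t) := by
  induction T with
  | zero => simp
  | succ T ih =>
    calc W (T + 1) ≤ W 0 * exp (∑ t ∈ range T, a t) * exp (a T) :=
          (h T).trans (mul_le_mul_of_nonneg_right ih (exp_pos _).le)
      _ = W 0 * exp (∑ t ∈ range (T + 1), a t) := by rw [mul_assoc, ← exp_add, sum_range_succ]

section Hedge

variable {ι : Type*} {η M : ℝ} {ℓ w : ℕ → ι → ℝ}

lemma hedge_weight_eq (hw0 : ∀ j, w 0 j = 1)
    (hw : ∀ t j, w (t + 1) j = w t j * exp (-η * ℓ t j)) (t : ℕ) (j : ι) :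
    w t j = exp (-η * ∑ s ∈ range t, ℓ s j) := by
  induction t with
  | zero => simp [hw0]
  | succ t ih => rw [hw, ih, ← exp_add, sum_range_succ, mul_add]

lemma hedge_total_weight_succ_le [Fintype ι] [Nonempty ι] (hw0 : ∀ j, w 0 j = 1)
    (hw : ∀ t j, w (t + 1) j = w t j * exp (-η * ℓ t j)) (hη : 0 ≤ η)
    (hℓ : ∀ t j, 0 ≤ ℓ t j ∧ ℓ t j ≤ M) (t : ℕ) :
    ∑ j, w (t + 1) j ≤ (∑ j, w t j) *
      exp (-η * ∑ j, w t j / (∑ k, w t k) * ℓ t j + η ^ 2 * M ^ 2 / 2) := by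
  have hwpos : ∀ j, 0 < w t j := fun j => hedge_weight_eq hw0 hw t j ▸ exp_pos _
  have hW : 0 < ∑ k, w t k := sum_pos (fun j _ => hwpos j) univ_nonempty
  have hq1 : ∑ j, w t j / ∑ k, w t k = 1 := by rw [← sum_div, div_self hW.ne']
  calc ∑ j, w (t + 1) j = (∑ k, w t k) * ∑ j, w t j / (∑ k, w t k) * exp (-η * ℓ t j) := by
        simp only [hw, mul_sum, div_mul_eq_mul_div, mul_div_cancel₀ _ hW.ne']
    _ ≤ _ := mul_le_mul_of_nonneg_left
        (sum_mul_exp_neg_le_exp (fun j => (div_pos (hwpos j) hW).le) hq1 hη (hℓ t)) hW.le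

theorem hedge_cumulative_loss_le [Fintype ι] (hw0 : ∀ j, w 0 j = 1)
    (hw : ∀ t j, w (t + 1) j = w t j * exp (-η * ℓ t j)) (hη : 0 < η)
    (hℓ : ∀ t j, 0 ≤ ℓ t j ∧ ℓ t j ≤ M) (T : ℕ) (i : ι) :
    ∑ t ∈ range T, ∑ j, w t j / (∑ k, w t k) * ℓ t j
      ≤ ∑ t ∈ range T, ℓ t i + T * (η * M ^ 2 / 2) + log (Fintype.card ι) / η := by
  have : Nonempty ι := ⟨i⟩
  have hcard : (0 : ℝ) < Fintype.card ι := by exact_mod_cast Fintype.card_pos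
  have htotal := le_mul_exp_sum_of_le_mul_exp (W := fun t => ∑ j, w t j)
    (hedge_total_weight_succ_le hw0 hw hη.le hℓ) T
  have hsingle : w T i ≤ ∑ j, w T j := single_le_sum
    (fun j _ => (hedge_weight_eq hw0 hw T j ▸ exp_pos _).le) (mem_univ i)
  have hlog : -η * ∑ t ∈ range T, ℓ t i ≤ log (Fintype.card ι) +
      ∑ t ∈ range T, (-η * ∑ j, w t j / (∑ k, w t k) * ℓ t j + η ^ 2 * M ^ 2 / 2) := by
    rw [← exp_le_exp, exp_add, exp_log hcard, ← hedge_weight_eq hw0 hw T i]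
    simpa [hw0] using hsingle.trans htotal
  simp only [sum_add_distrib, ← mul_sum, sum_const, card_range, nsmul_eq_mul] at hlog
  rw [← mul_le_mul_iff_of_pos_left hη, mul_add, mul_add, mul_div_cancel₀ _ hη.ne']
  linarith

end Hedge

theorem hedge_regret_bound_general
    (I : ℕ) (Θ : Type*) (M : ℝ)
    (R : Fin I → Θ → ℝ) (hR : ∀ i θ, 0 ≤ R i θ ∧ R i θ ≤ M)
    (η : ℝ) (hη : 0 < η) (T : ℕ) (hT : 1 ≤ T)
    (θ : ℕ → Θ) (w : ℕ → Fin I → ℝ) (p : ℕ → Fin I → ℝ)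
    (hw0 : ∀ i, w 0 i = 1)
    (hw : ∀ t i, w (t + 1) i = w t i * Real.exp (-η * R i (θ (t + 1))))
    (hp : ∀ t i, p (t + 1) i = w t i / ∑ j, w t j)
    (i : Fin I) :
    (1 / (T : ℝ)) * ∑ t ∈ Finset.Icc 1 T, ∑ j, p t j * R j (θ t)
      ≤ (1 / (T : ℝ)) * ∑ t ∈ Finset.Icc 1 T, R i (θ t)
        + η * M ^ 2 / 2 + Real.log I / ((T : ℝ) * η) := by
  have hIcc : ∀ f : ℕ → ℝ, ∑ t ∈ Icc 1 T, f t = ∑ t ∈ range T, f (t + 1) := fun f => by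
    rw [range_eq_Ico, sum_Ico_add' f 0 T 1, zero_add, Ico_add_one_right_eq_Icc]
  have hloss := hedge_cumulative_loss_le (ℓ := fun t j => R j (θ (t + 1))) hw0 hw hη
    (fun t j => hR j (θ (t + 1))) T i
  rw [Fintype.card_fin] at hloss
  simp only [hIcc, hp]
  have hTpos : (0 : ℝ) < T := by exact_mod_cast hT
  calc 1 / (T : ℝ) * ∑ t ∈ range T, ∑ j, w t j / (∑ k, w t k) * R j (θ (t + 1))
      ≤ 1 / T * (∑ t ∈ range T, R i (θ (t + 1)) + T * (η * M ^ 2 / 2) + log I / η) := by gcongr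
    _ = _ := by field_simp

/-- Hedge regret bound: for any step size `η > 0`, horizon `T ≥ 1`, and any
sequence `θ_1,…,θ_T`, the average payoff of the Hedge iterates is bounded by
the average payoff of any fixed decision rule `i` plus `η M²/2 + ln I/(T η)`. -/
theorem hedge_regret_bound
    (I : ℕ) (hI : 0 < I) (Θ : Type*) [Nonempty Θ] (M : ℝ) (hM : 0 < M)
    (R : Fin I → Θ → ℝ) (hR : ∀ i θ, 0 ≤ R i θ ∧ R i θ ≤ M)
    (η : ℝ) (hη : 0 < η) (T : ℕ) (hT : 1 ≤ T)
    (θ : ℕ → Θ) (w : ℕ → Fin I → ℝ) (p : ℕ → Fin I → ℝ)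
    (hw0 : ∀ i, w 0 i = 1)
    (hw : ∀ t i, w (t + 1) i = w t i * Real.exp (-η * R i (θ (t + 1))))
    (hp : ∀ t i, p (t + 1) i = w t i / ∑ j, w t j)
    (i : Fin I) :
    (1 / (T : ℝ)) * ∑ t ∈ Finset.Icc 1 T, ∑ j, p t j * R j (θ t)
      ≤ (1 / (T : ℝ)) * ∑ t ∈ Finset.Icc 1 T, R i (θ t)
        + η * M ^ 2 / 2 + Real.log I / ((T : ℝ) * η) :=
  hedge_regret_bound_general I Θ M R hR η hη T hT θ w p hw0 hw hp i
end

section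
/- Hedge with an approximate oracle: suppose I ≥ 2, let 0 < ε ≤ M and δ ≥ 0, set η = ε/M² and T = ⌈2·M²·ln(I)/ε²⌉, and run the Hedge algorithm against a sequence θ_1,…,θ_T in which each θ_t is a δ-approximate best response to p_t, i.e. f(p_t) − δ ≤ R(p_t,θ_t) ≤ f(p_t). Then the averaged output satisfies sup_{θ∈Θ} R(p̄_T,θ) ≤ v̄ + ε + δ, where p̄_T = (1/T)·Σ_{t=1}^T p_t and v̄ = inf_{p∈Δ} f(p). -/
open Finset Real

lemma sum_mul_exp_neg_mul_le {ι : Type*} [Fintype ι] {q x : ι → ℝ} {η M : ℝ}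
    (hq : q ∈ stdSimplex ℝ ι) (hx : ∀ i, 0 ≤ x i ∧ x i ≤ M) (hη : 0 ≤ η) :
    ∑ i, q i * exp (-η * x i) ≤ exp (-η * ∑ i, q i * x i + η ^ 2 * M ^ 2 / 2) := by
  have hterm : ∀ i, exp (-η * x i) ≤ 1 - η * x i + η ^ 2 * M ^ 2 / 2 := fun i => by
    have hsq : (η * x i) ^ 2 ≤ η ^ 2 * M ^ 2 := by
      rw [mul_pow]; gcongr; exacts [(hx i).1, (hx i).2]
    rw [neg_mul]
    linarith [Real.exp_neg_le_one_sub_add_sq_div_two (mul_nonneg hη (hx i).1)]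
  calc ∑ i, q i * exp (-η * x i) ≤ ∑ i, q i * (1 - η * x i + η ^ 2 * M ^ 2 / 2) :=
        sum_le_sum fun i _ => mul_le_mul_of_nonneg_left (hterm i) (hq.1 i)
    _ = (∑ i, q i) * (1 + η ^ 2 * M ^ 2 / 2) - η * ∑ i, q i * x i := by
        rw [sum_mul, mul_sum, ← sum_sub_distrib]
        exact sum_congr rfl fun i _ => by ring
    _ ≤ exp (-η * ∑ i, q i * x i + η ^ 2 * M ^ 2 / 2) := by
        rw [hq.2]
        linarith [add_one_le_exp (-η * ∑ i, q i * x i + η ^ 2 * M ^ 2 / 2)]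

/-- Round `t + 1` plays `p (t + 1)` and suffers `ℓ (t + 1)`; `p 0` and `ℓ 0` are unconstrained. -/
structure IsHedgeRun {ι : Type*} [Fintype ι] (η : ℝ) (ℓ w p : ℕ → ι → ℝ) : Prop where
  weight_zero : ∀ i, w 0 i = 1
  weight_succ : ∀ t i, w (t + 1) i = w t i * exp (-η * ℓ (t + 1) i)
  play_succ : ∀ t i, p (t + 1) i = w t i / ∑ j, w t j

namespace IsHedgeRun

variable {ι : Type*} [Fintype ι] {η M : ℝ} {ℓ w p : ℕ → ι → ℝ}

lemma weight_eq (h : IsHedgeRun η ℓ w p) (t : ℕ) (i : ι) :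
    w t i = exp (-η * ∑ s ∈ Icc 1 t, ℓ s i) := by
  induction t with
  | zero => simp [h.weight_zero]
  | succ n ih =>
    rw [h.weight_succ n i, ih, ← exp_add, sum_Icc_succ_top (by omega), mul_add]

lemma weight_pos (h : IsHedgeRun η ℓ w p) (t : ℕ) (i : ι) : 0 < w t i :=
  h.weight_eq t i ▸ exp_pos _

variable [Nonempty ι]

lemma sum_weight_pos (h : IsHedgeRun η ℓ w p) (t : ℕ) : 0 < ∑ i, w t i :=
  sum_pos (fun i _ => h.weight_pos t i) univ_nonempty

lemma mem_stdSimplex (h : IsHedgeRun η ℓ w p) (t : ℕ) : p (t + 1) ∈ stdSimplex ℝ ι := by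
  refine ⟨fun i => ?_, ?_⟩
  · rw [h.play_succ]; exact div_nonneg (h.weight_pos t i).le (h.sum_weight_pos t).le
  · simp only [h.play_succ, ← sum_div, div_self (h.sum_weight_pos t).ne']

lemma sum_weight_succ_le (h : IsHedgeRun η ℓ w p) (hℓ : ∀ t i, 0 ≤ ℓ t i ∧ ℓ t i ≤ M)
    (hη : 0 ≤ η) (t : ℕ) :
    ∑ i, w (t + 1) i ≤
      (∑ i, w t i) * exp (-η * ∑ i, p (t + 1) i * ℓ (t + 1) i + η ^ 2 * M ^ 2 / 2) := by
  have hmix : ∑ i, w (t + 1) i = (∑ i, w t i) * ∑ i, p (t + 1) i * exp (-η * ℓ (t + 1) i) := by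
    rw [mul_sum]
    refine sum_congr rfl fun i _ => ?_
    rw [h.weight_succ, h.play_succ]
    field_simp [(h.sum_weight_pos t).ne']
  rw [hmix]
  exact mul_le_mul_of_nonneg_left
    (sum_mul_exp_neg_mul_le (h.mem_stdSimplex t) (hℓ (t + 1)) hη) (h.sum_weight_pos t).le

lemma sum_weight_le (h : IsHedgeRun η ℓ w p) (hℓ : ∀ t i, 0 ≤ ℓ t i ∧ ℓ t i ≤ M)
    (hη : 0 ≤ η) (n : ℕ) :
    ∑ i, w n i ≤
      Fintype.card ι * exp (-η * ∑ t ∈ Icc 1 n, ∑ i, p t i * ℓ t i + n * (η ^ 2 * M ^ 2 / 2)) := by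
  induction n with
  | zero => simp [h.weight_zero]
  | succ n ih =>
    calc ∑ i, w (n + 1) i
        ≤ (∑ i, w n i) * exp (-η * ∑ i, p (n + 1) i * ℓ (n + 1) i + η ^ 2 * M ^ 2 / 2) :=
          h.sum_weight_succ_le hℓ hη n
      _ ≤ Fintype.card ι * exp (-η * ∑ t ∈ Icc 1 n, ∑ i, p t i * ℓ t i + n * (η ^ 2 * M ^ 2 / 2))
            * exp (-η * ∑ i, p (n + 1) i * ℓ (n + 1) i + η ^ 2 * M ^ 2 / 2) := by gcongr
      _ = _ := by
          rw [mul_assoc, ← exp_add, sum_Icc_succ_top (by omega)]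
          push_cast
          ring_nf

theorem regret_le (h : IsHedgeRun η ℓ w p) (hℓ : ∀ t i, 0 ≤ ℓ t i ∧ ℓ t i ≤ M) (hη : 0 < η)
    (n : ℕ) (i : ι) :
    ∑ t ∈ Icc 1 n, ∑ j, p t j * ℓ t j ≤
      ∑ t ∈ Icc 1 n, ℓ t i + log (Fintype.card ι) / η + n * η * M ^ 2 / 2 := by
  have hexpert : exp (-η * ∑ t ∈ Icc 1 n, ℓ t i) ≤ ∑ j, w n j :=
    h.weight_eq n i ▸ single_le_sum (fun j _ => (h.weight_pos n j).le) (mem_univ i)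
  have hlog := log_le_log (exp_pos _) (hexpert.trans (h.sum_weight_le hℓ hη.le n))
  rw [log_exp, log_mul (by simp) (exp_ne_zero _), log_exp] at hlog
  refine le_of_mul_le_mul_left ?_ hη
  have hcancel : η * (log (Fintype.card ι) / η) = log (Fintype.card ι) := mul_div_cancel₀ _ hη.ne'
  linear_combination hlog - hcancel

theorem regret_le_of_mem_stdSimplex (h : IsHedgeRun η ℓ w p)
    (hℓ : ∀ t i, 0 ≤ ℓ t i ∧ ℓ t i ≤ M) (hη : 0 < η) (n : ℕ) {q : ι → ℝ}
    (hq : q ∈ stdSimplex ℝ ι) :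
    ∑ t ∈ Icc 1 n, ∑ j, p t j * ℓ t j ≤
      ∑ t ∈ Icc 1 n, ∑ i, q i * ℓ t i + log (Fintype.card ι) / η + n * η * M ^ 2 / 2 := by
  set C := log (Fintype.card ι) / η + n * η * M ^ 2 / 2
  calc ∑ t ∈ Icc 1 n, ∑ j, p t j * ℓ t j
      = ∑ i, q i * ∑ t ∈ Icc 1 n, ∑ j, p t j * ℓ t j := by rw [← sum_mul, hq.2, one_mul]
    _ ≤ ∑ i, q i * (∑ t ∈ Icc 1 n, ℓ t i + C) := by
        gcongr with i
        · exact hq.1 i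
        · rw [← add_assoc]; exact h.regret_le hℓ hη n i
    _ = ∑ t ∈ Icc 1 n, ∑ i, q i * ℓ t i + C := by
        simp only [mul_add, sum_add_distrib, ← sum_mul, hq.2, one_mul, mul_sum]
        rw [sum_comm]
    _ = _ := (add_assoc _ _ _).symm

end IsHedgeRun

section Game

variable {ι Θ : Type*} [Fintype ι] {R : ι → Θ → ℝ} {M : ℝ}

lemma bddAbove_range_sum_mul (hR : ∀ i θ, R i θ ≤ M) {q : ι → ℝ} (hq : ∀ i, 0 ≤ q i) :
    BddAbove (Set.range fun θ => ∑ i, q i * R i θ) := by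
  refine ⟨∑ i, q i * M, ?_⟩
  rintro _ ⟨θ, rfl⟩
  exact sum_le_sum fun i _ => mul_le_mul_of_nonneg_left (hR i θ) (hq i)

lemma sum_Icc_le_mul_iSup (hR : ∀ i θ, R i θ ≤ M) {q : ι → ℝ} (hq : ∀ i, 0 ≤ q i)
    (θ : ℕ → Θ) (T : ℕ) :
    ∑ t ∈ Icc 1 T, ∑ i, q i * R i (θ t) ≤ T * ⨆ θ', ∑ i, q i * R i θ' := by
  calc ∑ t ∈ Icc 1 T, ∑ i, q i * R i (θ t) ≤ ∑ t ∈ Icc 1 T, ⨆ θ', ∑ i, q i * R i θ' :=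
        sum_le_sum fun t _ => le_ciSup (bddAbove_range_sum_mul hR hq) (θ t)
    _ = T * ⨆ θ', ∑ i, q i * R i θ' := by simp

lemma iSup_average_le [Nonempty Θ] (hR : ∀ i θ, R i θ ≤ M) {p : ℕ → ι → ℝ} {θ : ℕ → Θ}
    {δ : ℝ} {T : ℕ} (hT : 0 < T) (hp : ∀ t ∈ Icc 1 T, ∀ i, 0 ≤ p t i)
    (hbr : ∀ t ∈ Icc 1 T, (⨆ θ', ∑ i, p t i * R i θ') - δ ≤ ∑ i, p t i * R i (θ t)) :
    ⨆ θ', ∑ i, ((1 / (T : ℝ)) * ∑ t ∈ Icc 1 T, p t i) * R i θ' ≤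
      1 / (T : ℝ) * ∑ t ∈ Icc 1 T, ∑ i, p t i * R i (θ t) + δ := by
  refine ciSup_le fun θ' => ?_
  calc ∑ i, ((1 / (T : ℝ)) * ∑ t ∈ Icc 1 T, p t i) * R i θ'
      = 1 / (T : ℝ) * ∑ t ∈ Icc 1 T, ∑ i, p t i * R i θ' := by
        simp only [mul_sum, sum_mul, mul_assoc]
        exact sum_comm
    _ ≤ 1 / (T : ℝ) * ∑ t ∈ Icc 1 T, (∑ i, p t i * R i (θ t) + δ) := by
        gcongr with t ht
        linarith [hbr t ht, le_ciSup (bddAbove_range_sum_mul hR (hp t ht)) θ']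
    _ = 1 / (T : ℝ) * ∑ t ∈ Icc 1 T, ∑ i, p t i * R i (θ t) + δ := by
        rw [sum_add_distrib, sum_const, Nat.card_Icc, Nat.add_sub_cancel, nsmul_eq_mul]
        field_simp

lemma iSup_average_le_of_sum_le [Nonempty Θ] (hR : ∀ i θ, R i θ ≤ M) {p : ℕ → ι → ℝ}
    {θ : ℕ → Θ} {q : ι → ℝ} {ε δ : ℝ} {T : ℕ} (hT : 0 < T) (hp : ∀ t ∈ Icc 1 T, ∀ i, 0 ≤ p t i)
    (hq : ∀ i, 0 ≤ q i)
    (hbr : ∀ t ∈ Icc 1 T, (⨆ θ', ∑ i, p t i * R i θ') - δ ≤ ∑ i, p t i * R i (θ t))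
    (hregret : ∑ t ∈ Icc 1 T, ∑ i, p t i * R i (θ t) ≤
      ∑ t ∈ Icc 1 T, ∑ i, q i * R i (θ t) + T * ε) :
    ⨆ θ', ∑ i, ((1 / (T : ℝ)) * ∑ t ∈ Icc 1 T, p t i) * R i θ' ≤
      (⨆ θ', ∑ i, q i * R i θ') + ε + δ := by
  have hq_risk := sum_Icc_le_mul_iSup hR hq θ T
  calc _ ≤ 1 / (T : ℝ) * ∑ t ∈ Icc 1 T, ∑ i, p t i * R i (θ t) + δ :=
        iSup_average_le hR hT hp hbr
    _ ≤ 1 / (T : ℝ) * (T * ((⨆ θ', ∑ i, q i * R i θ') + ε)) + δ := by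
        gcongr; linarith
    _ = (⨆ θ', ∑ i, q i * R i θ') + ε + δ := by field_simp

end Game

lemma log_div_add_le_mul {L ε M η T : ℝ} (hε : 0 < ε) (hM : 0 < M) (hη : η = ε / M ^ 2)
    (hT : 2 * M ^ 2 * L / ε ^ 2 ≤ T) :
    L / η + T * η * M ^ 2 / 2 ≤ T * ε := by
  rw [div_le_iff₀ (by positivity)] at hT
  subst hη
  field_simp
  linarith

theorem hedge_approximate_oracle_general
    (I : ℕ) (hI : 2 ≤ I) (Θ : Type*) [Nonempty Θ] (M : ℝ) (hM : 0 < M)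
    (R : Fin I → Θ → ℝ) (hR : ∀ i θ, 0 ≤ R i θ ∧ R i θ ≤ M)
    (ε : ℝ) (hε0 : 0 < ε) (δ : ℝ)
    (η : ℝ) (hη : η = ε / M ^ 2)
    (T : ℕ) (hT : T = ⌈2 * M ^ 2 * Real.log I / ε ^ 2⌉₊)
    (θ : ℕ → Θ) (w : ℕ → Fin I → ℝ) (p : ℕ → Fin I → ℝ)
    (hw0 : ∀ i, w 0 i = 1)
    (hw : ∀ t i, w (t + 1) i = w t i * Real.exp (-η * R i (θ (t + 1))))
    (hp : ∀ t i, p (t + 1) i = w t i / ∑ j, w t j)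
    (hbr : ∀ t ∈ Finset.Icc 1 T,
      (⨆ θ' : Θ, ∑ i, p t i * R i θ') - δ ≤ ∑ i, p t i * R i (θ t)
        ∧ ∑ i, p t i * R i (θ t) ≤ ⨆ θ' : Θ, ∑ i, p t i * R i θ') :
    (⨆ θ' : Θ, ∑ i, ((1 / (T : ℝ)) * ∑ t ∈ Finset.Icc 1 T, p t i) * R i θ')
      ≤ sInf {v : ℝ | ∃ q : Fin I → ℝ, (∀ i, 0 ≤ q i) ∧ ∑ i, q i = 1 ∧
          v = ⨆ θ' : Θ, ∑ i, q i * R i θ'} + ε + δ := by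
  have : NeZero I := ⟨by omega⟩
  have hη0 : 0 < η := hη ▸ by positivity
  have hT0 : 0 < T := hT ▸ Nat.ceil_pos.mpr (by
    have := log_pos (by exact_mod_cast hI : (1 : ℝ) < I)
    positivity)
  have hRM : ∀ i θ, R i θ ≤ M := fun i θ => (hR i θ).2
  have run : IsHedgeRun η (fun t i => R i (θ t)) w p := ⟨hw0, hw, hp⟩
  have hp_nonneg : ∀ t ∈ Icc 1 T, ∀ i, 0 ≤ p t i := fun t ht => by
    obtain ⟨s, rfl⟩ := Nat.exists_eq_add_of_le' (mem_Icc.1 ht).1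
    exact (run.mem_stdSimplex s).1
  have hparam : log I / η + T * η * M ^ 2 / 2 ≤ T * ε :=
    log_div_add_le_mul hε0 hM hη (hT ▸ Nat.le_ceil _)
  have hmixed : ∀ q ∈ stdSimplex ℝ (Fin I),
      (⨆ θ' : Θ, ∑ i, ((1 / (T : ℝ)) * ∑ t ∈ Icc 1 T, p t i) * R i θ') ≤
        (⨆ θ' : Θ, ∑ i, q i * R i θ') + ε + δ := fun q hq => by
    have hregret := run.regret_le_of_mem_stdSimplex (fun t i => hR i (θ t)) hη0 T hq
    rw [Fintype.card_fin] at hregret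
    exact iSup_average_le_of_sum_le hRM hT0 hp_nonneg hq.1 (fun t ht => (hbr t ht).1)
      (by linarith)
  obtain ⟨hsingle0, hsingle1⟩ := single_mem_stdSimplex ℝ (0 : Fin I)
  rw [← sub_le_iff_le_add, ← sub_le_iff_le_add]
  refine le_csInf ⟨_, _, hsingle0, hsingle1, rfl⟩ ?_
  rintro _ ⟨q, hq0, hq1, rfl⟩
  linarith [hmixed q ⟨hq0, hq1⟩]

/-- Hedge with a `δ`-approximate best-response oracle: with `η = ε/M²` and
`T = ⌈2 M² ln I / ε²⌉`, if each `θ_t` satisfies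
`f(p_t) − δ ≤ R(p_t,θ_t) ≤ f(p_t)`, then the averaged output satisfies
`sup_θ R(p̄_T,θ) ≤ v̄ + ε + δ`. -/
theorem hedge_approximate_oracle
    (I : ℕ) (hI : 2 ≤ I) (Θ : Type*) [Nonempty Θ] (M : ℝ) (hM : 0 < M)
    (R : Fin I → Θ → ℝ) (hR : ∀ i θ, 0 ≤ R i θ ∧ R i θ ≤ M)
    (ε : ℝ) (hε0 : 0 < ε) (hεM : ε ≤ M) (δ : ℝ) (hδ : 0 ≤ δ)
    (η : ℝ) (hη : η = ε / M ^ 2)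
    (T : ℕ) (hT : T = ⌈2 * M ^ 2 * Real.log I / ε ^ 2⌉₊)
    (θ : ℕ → Θ) (w : ℕ → Fin I → ℝ) (p : ℕ → Fin I → ℝ)
    (hw0 : ∀ i, w 0 i = 1)
    (hw : ∀ t i, w (t + 1) i = w t i * Real.exp (-η * R i (θ (t + 1))))
    (hp : ∀ t i, p (t + 1) i = w t i / ∑ j, w t j)
    (hbr : ∀ t ∈ Finset.Icc 1 T,
      (⨆ θ' : Θ, ∑ i, p t i * R i θ') - δ ≤ ∑ i, p t i * R i (θ t)
        ∧ ∑ i, p t i * R i (θ t) ≤ ⨆ θ' : Θ, ∑ i, p t i * R i θ') :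
    (⨆ θ' : Θ, ∑ i, ((1 / (T : ℝ)) * ∑ t ∈ Finset.Icc 1 T, p t i) * R i θ')
      ≤ sInf {v : ℝ | ∃ q : Fin I → ℝ, (∀ i, 0 ≤ q i) ∧ ∑ i, q i = 1 ∧
          v = ⨆ θ' : Θ, ∑ i, q i * R i θ'} + ε + δ :=
  hedge_approximate_oracle_general I hI Θ M hM R hR ε hε0 δ η hη T hT θ w p hw0 hw hp hbr
end
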